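/- arXiv:1704.03062 — 5 statements merged into one kernel-verified Lean document; each statement's English description precedes it below -/
import Mathlib

section
/- Let $d \ge 1$, $\alpha > 0$, $\beta = 2\alpha^{1/d}$, and let $0 \le a \le b$ be reals with $\alpha a^d \ge i$ for a real $i \ge 0$. Then $\beta(b - a) \ge (2\alpha b^d - i)^{1/d} - (2\alpha a^d - i)^{1/d}$. -/
/-!
With `t = α^(1/d)`, `A = (2αa^d - i)^(1/d)` and `s = 2t(b - a)` it suffices to show
`2αb^d - i ≤ (A + s)^d`. Since `i ≤ αa^d` we have `ta ≤ A`, and on `[0, ∞)` the increment of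
`x ↦ x^d` over an interval of fixed length grows with its left endpoint. Comparing the increment
over `[A, A + s]` with the one over `[ta, ta + s]`, and splitting the latter at `tb`, gives
`(A + s)^d - A^d ≥ 2((tb)^d - (ta)^d) = 2α(b^d - a^d)`.
-/

lemma add_pow_sub_pow_le_add_pow_sub_pow (d : ℕ) {v u s : ℝ} (hv : 0 ≤ v) (hvu : v ≤ u)
    (hs : 0 ≤ s) : (v + s) ^ d - v ^ d ≤ (u + s) ^ d - u ^ d := by
  have binomial (x : ℝ) :
      (x + s) ^ d - x ^ d = ∑ k ∈ Finset.range d, x ^ k * s ^ (d - k) * d.choose k := by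
    simp [add_pow, Finset.sum_range_succ]
  rw [binomial, binomial]
  gcongr

lemma pow_add_two_mul_sub_pow_le_add_two_mul_sub_pow {d : ℕ} {p q A : ℝ} (hp : 0 ≤ p)
    (hpq : p ≤ q) (hpA : p ≤ A) : A ^ d + 2 * (q ^ d - p ^ d) ≤ (A + 2 * (q - p)) ^ d := by
  have hqp : 0 ≤ q - p := sub_nonneg.2 hpq
  have split : q ^ d - p ^ d ≤ (q + (q - p)) ^ d - q ^ d := by
    simpa using add_pow_sub_pow_le_add_pow_sub_pow d hp hpq hqp
  have shift : (p + 2 * (q - p)) ^ d - p ^ d ≤ (A + 2 * (q - p)) ^ d - A ^ d :=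
    add_pow_sub_pow_le_add_pow_sub_pow d hp hpA (by positivity)
  have : p + 2 * (q - p) = q + (q - p) := by ring
  rw [this] at shift
  linarith

theorem stmt_1_general (d : ℕ) (hd : 1 ≤ d) (α i : ℝ) (hα : 0 < α)
    (a b : ℝ) (ha : 0 ≤ a) (hab : a ≤ b) (hia : i ≤ α * a ^ d) :
    (2 * α * b ^ d - i) ^ ((1 : ℝ) / d) - (2 * α * a ^ d - i) ^ ((1 : ℝ) / d)
      ≤ 2 * α ^ ((1 : ℝ) / d) * (b - a) := by
  have hd0 : (0 : ℝ) < d := by exact_mod_cast hd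
  set t := α ^ ((1 : ℝ) / d) with ht_def
  set A := (2 * α * a ^ d - i) ^ ((1 : ℝ) / d) with hA_def
  have ht : 0 ≤ t := by positivity
  have ht_mul_pow (x : ℝ) : (t * x) ^ d = α * x ^ d := by
    rw [mul_pow, ht_def, one_div, Real.rpow_inv_natCast_pow hα.le (by omega)]
  have had : 0 ≤ α * a ^ d := by positivity
  have hA : 0 ≤ A := Real.rpow_nonneg (by linarith) _
  have htaA : t * a ≤ A := by
    rw [hA_def, one_div, Real.le_rpow_inv_iff_of_pos (by positivity) (by linarith) hd0,
      Real.rpow_natCast, ht_mul_pow]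
    linarith
  have hAd : A ^ d = 2 * α * a ^ d - i := by
    rw [hA_def, one_div, Real.rpow_inv_natCast_pow (by linarith) (by omega)]
  have htab : t * a ≤ t * b := mul_le_mul_of_nonneg_left hab ht
  have hpow := pow_add_two_mul_sub_pow_le_add_two_mul_sub_pow (d := d) (mul_nonneg ht ha) htab htaA
  rw [hAd, ht_mul_pow, ht_mul_pow] at hpow
  have hbd : α * a ^ d ≤ α * b ^ d := by gcongr
  have hroot : (2 * α * b ^ d - i) ^ ((1 : ℝ) / d) ≤ A + 2 * (t * b - t * a) := by
    rw [one_div, Real.rpow_inv_le_iff_of_pos (by linarith) (by linarith) hd0, Real.rpow_natCast]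
    linarith
  linarith

/-- the key analytic inequality of Claim 2.1. -/
theorem stmt_1 (d : ℕ) (hd : 1 ≤ d) (α i : ℝ) (hα : 0 < α) (hi : 0 ≤ i)
    (a b : ℝ) (ha : 0 ≤ a) (hab : a ≤ b) (hia : i ≤ α * a ^ d) :
    (2 * α * b ^ d - i) ^ ((1 : ℝ) / d) - (2 * α * a ^ d - i) ^ ((1 : ℝ) / d)
      ≤ 2 * α ^ ((1 : ℝ) / d) * (b - a) :=
  stmt_1_general d hd α i hα a b ha hab hia
end

section
/- The sequence consisting of all points of $\mathbb{Z}^m \subset \mathbb{R}^m$ (for $m \ge 2$) is not $1$-controlling: for every assignment of reals $(y_x)_{x \in \mathbb{Z}^m}$ there exists a $2$-Lipschitz function $f : \mathbb{R}^m \to \mathbb{R}$ such that $|f(x) - y_x| \ge 1$ for every $x \in \mathbb{Z}^m$. -/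
/-! Pick at each lattice point `z` a value `±1` lying at distance `≥ 1` from `y z`. Distinct lattice
points are at sup-distance `≥ 1` and the chosen values differ by at most `2`, so this assignment is
`2`-Lipschitz on the lattice, and McShane's extension makes it a `2`-Lipschitz function on `ℝ^m`. -/

open NNReal

theorem one_le_dist_intCast_of_ne {ι : Type*} [Fintype ι] {z z' : ι → ℤ} (h : z ≠ z') :
    1 ≤ dist (fun j => (z j : ℝ)) (fun j => (z' j : ℝ)) := by
  obtain ⟨j, hj⟩ := Function.ne_iff.mp h
  calc (1 : ℝ) ≤ |((z j - z' j : ℤ) : ℝ)| := by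
        exact_mod_cast Int.one_le_abs (sub_ne_zero.mpr hj)
    _ = dist (z j : ℝ) (z' j : ℝ) := by push_cast; rw [Real.dist_eq]
    _ ≤ _ := dist_le_pi_dist (fun j => (z j : ℝ)) (fun j => (z' j : ℝ)) j

theorem LipschitzOnWith.of_one_le_dist {X Y : Type*} [PseudoMetricSpace X] [PseudoMetricSpace Y]
    {f : X → Y} {s : Set X} {K : ℝ≥0} (hsep : ∀ x ∈ s, ∀ x' ∈ s, x ≠ x' → 1 ≤ dist x x')
    (hf : ∀ x ∈ s, ∀ x' ∈ s, dist (f x) (f x') ≤ K) : LipschitzOnWith K f s := by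
  refine LipschitzOnWith.of_dist_le_mul fun x hx x' hx' => ?_
  rcases eq_or_ne x x' with rfl | hne
  · simp
  · calc dist (f x) (f x') ≤ K * 1 := by simpa using hf x hx x' hx'
      _ ≤ K * dist x x' := by gcongr; exact hsep x hx x' hx' hne

theorem exists_lipschitzWith_eq_of_one_le_dist {X ι : Type*} [PseudoMetricSpace X] {e : ι → X}
    (he : ∀ i j, i ≠ j → 1 ≤ dist (e i) (e j)) {g : ι → ℝ} {K : ℝ≥0}
    (hg : ∀ i j, dist (g i) (g j) ≤ K) : ∃ f : X → ℝ, LipschitzWith K f ∧ ∀ i, f (e i) = g i := by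
  have he_inj : Function.Injective e := fun i j hij => by
    by_contra hne
    have := he i j hne
    rw [hij, dist_self] at this
    exact zero_lt_one.not_ge this
  have hlip : LipschitzOnWith K (Function.extend e g 0) (Set.range e) := by
    refine .of_one_le_dist ?_ ?_
    · rintro _ ⟨i, rfl⟩ _ ⟨j, rfl⟩ hne
      exact he i j (ne_of_apply_ne e hne)
    · rintro _ ⟨i, rfl⟩ _ ⟨j, rfl⟩
      simpa only [he_inj.extend_apply] using hg i j
  obtain ⟨f, hf, heq⟩ := hlip.extend_real
  exact ⟨f, hf, fun i => by rw [← heq ⟨i, rfl⟩, he_inj.extend_apply]⟩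

theorem stmt_4_general (m : ℕ) (y : (Fin m → ℤ) → ℝ) :
    ∃ f : (Fin m → ℝ) → ℝ, LipschitzWith 2 f ∧
      ∀ z : Fin m → ℤ, 1 ≤ |f (fun j => (z j : ℝ)) - y z| := by
  set g : (Fin m → ℤ) → ℝ := fun z => if y z ≤ 0 then 1 else -1
  have hg : ∀ z z', dist (g z) (g z') ≤ (2 : ℝ≥0) := by
    intro z z'
    simp only [g, Real.dist_eq]
    split_ifs <;> norm_num
  obtain ⟨f, hf, hfg⟩ :=
    exists_lipschitzWith_eq_of_one_le_dist (fun _ _ => one_le_dist_intCast_of_ne) hg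
  refine ⟨f, hf, fun z => ?_⟩
  rw [hfg z]
  simp only [g]
  split_ifs with h
  · rw [abs_of_nonneg] <;> linarith
  · rw [abs_of_nonpos] <;> linarith

/-- the integer lattice `ℤ^m ⊆ ℝ^m` (`m ≥ 2`) is not `1`-controlling:
for any assignment of reals to the lattice points there is a `2`-Lipschitz function
`ℝ^m → ℝ` staying at distance `≥ 1` from all the assigned values. -/
theorem stmt_4 (m : ℕ) (hm : 2 ≤ m) (y : (Fin m → ℤ) → ℝ) :
    ∃ f : (Fin m → ℝ) → ℝ, LipschitzWith 2 f ∧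
      ∀ z : Fin m → ℤ, 1 ≤ |f (fun j => (z j : ℝ)) - y z| :=
  stmt_4_general m y
end

section
/- Let $j, n, d$ be positive integers, $k = (j(n+1)+1)^d$, and let $0 \le x_1 \le x_2 \le \cdots \le x_k \le n$ be reals. Set $r = j(n+1)$, $r' = r/(r+1)$, and let $z_1 > z_2 > \cdots > z_k$ (in lexicographic order) be the centers of the unique partition of the $\ell_\infty$-ball of radius $r$ in $\mathbb{R}^d$ around the origin into $k$ subballs of radius $r'$. Define $y_i = z_i - j(n - x_i)v$ where $v = (1,\ldots,1) \in \mathbb{R}^d$. Then every $j$-Lipschitz function $f : \mathbb{R} \to \mathbb{R}^d$ (maximum norm) with $|f(0)| \le j$ satisfies $|f(x_i) - y_i| < 1$ for some $1 \le i \le k$. -/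
/-!
Shifting by `j (n - x) v` turns `f` into a map `g` that is coordinatewise antitone and sends
`[0, n]` into the cube `[-r, r]^d`. Sending `i` to the subcube containing `g (x i)`, and reading
subcubes as base-`(r + 1)` numerals in the lexicographic order of the statement, gives a monotone
self-map of `Fin k`. By Knaster–Tarski it has a fixed point `i`, i.e. `g (x i)` lies in the
subcube centred at `z i`, so `‖f (x i) - y i‖ = ‖g (x i) - z i‖ ≤ r' < 1`.
-/

open NNReal

def digitsMSBEquiv (b d : ℕ) : Fin (b ^ d) ≃ (Fin d → Fin b) :=
  finFunctionFinEquiv.symm.trans (Fin.revPerm.arrowCongr (Equiv.refl _))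

lemma digitsMSBEquiv_apply_val {b d : ℕ} (i : Fin (b ^ d)) (t : Fin d) :
    (digitsMSBEquiv b d i t : ℕ) = i / b ^ (d - 1 - t) % b := by
  simp [digitsMSBEquiv, Equiv.arrowCongr_apply, Fin.val_rev, Nat.sub_sub, add_comm]

lemma digitsMSBEquiv_symm_apply_val {b d : ℕ} (c : Fin d → Fin b) :
    ((digitsMSBEquiv b d).symm c : ℕ) = ∑ s : Fin d, (c s.rev : ℕ) * b ^ (s : ℕ) := by
  simp [digitsMSBEquiv]

lemma digitsMSBEquiv_symm_monotone {b d : ℕ} : Monotone (digitsMSBEquiv b d).symm := by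
  intro c c' hcc'
  rw [Fin.le_iff_val_le_val, digitsMSBEquiv_symm_apply_val, digitsMSBEquiv_symm_apply_val]
  gcongr with s
  exact hcc' _

/- `[-R, R]` is cut into `R + 1` intervals of radius `R / (R + 1)`, numbered from the top;
`cellIndex R u` is the one containing `u`. -/
noncomputable def cellCenter (R a : ℕ) : ℝ := R - R / (R + 1) * (2 * a + 1)

noncomputable def cellIndex (R : ℕ) (u : ℝ) : Fin (R + 1) :=
  ⟨min R ⌊(R - u) / (2 * (R / (R + 1)))⌋₊, Nat.lt_succ_of_le (min_le_left _ _)⟩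

lemma cellIndex_antitone (R : ℕ) : Antitone (cellIndex R) := by
  intro u v huv
  simp only [cellIndex, Fin.mk_le_mk]
  gcongr

lemma abs_sub_cellCenter_cellIndex_le {R : ℕ} {u : ℝ} (hu : |u| ≤ R) :
    |u - cellCenter R (cellIndex R u)| ≤ R / (R + 1) := by
  rcases R.eq_zero_or_pos with rfl | hR
  · simpa [cellCenter] using hu
  set ρ : ℝ := R / (R + 1) with hρ
  set s : ℝ := R - u
  set c : ℕ := (cellIndex R u : ℕ)
  have hρR : 2 * ρ * (R + 1) = 2 * R := by rw [hρ]; field_simp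
  have hs : 0 ≤ s ∧ s ≤ 2 * ρ * (R + 1) := by
    rw [hρR]; constructor <;> linarith [abs_le.1 hu]
  have hc_le : c * (2 * ρ) ≤ s := by
    calc c * (2 * ρ) ≤ ⌊s / (2 * ρ)⌋₊ * (2 * ρ) := by gcongr; exact_mod_cast min_le_right _ _
      _ ≤ s := (le_div_iff₀ (by positivity)).1 (Nat.floor_le (div_nonneg hs.1 (by positivity)))
  have hle_c : s ≤ (c + 1) * (2 * ρ) := by
    rcases le_total ⌊s / (2 * ρ)⌋₊ R with h | h
    · have hc : c = ⌊s / (2 * ρ)⌋₊ := min_eq_right h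
      rw [hc, ← div_le_iff₀ (by positivity)]
      exact (Nat.lt_floor_add_one _).le
    · have hc : c = R := min_eq_left h
      rw [hc]; linarith
  rw [cellCenter, abs_le]
  constructor <;> linarith

theorem exists_abs_sub_cellCenter_le {R d : ℕ} (g : Fin ((R + 1) ^ d) → Fin d → ℝ)
    (hg : Antitone g) (hgR : ∀ i t, |g i t| ≤ R) :
    ∃ i : Fin ((R + 1) ^ d), ∀ t,
      |g i t - cellCenter R (i / (R + 1) ^ (d - 1 - t) % (R + 1))| ≤ R / (R + 1) := by
  let cells (i : Fin ((R + 1) ^ d)) : Fin d → Fin (R + 1) := fun t => cellIndex R (g i t)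
  have hcells : Monotone cells := fun i i' hii' t => cellIndex_antitone R (hg hii' t)
  let Φ : Fin ((R + 1) ^ d) →o Fin ((R + 1) ^ d) :=
    ⟨(digitsMSBEquiv _ _).symm ∘ cells, digitsMSBEquiv_symm_monotone.comp hcells⟩
  have hdigits : digitsMSBEquiv _ _ Φ.lfp = cells Φ.lfp :=
    ((digitsMSBEquiv _ _).symm_apply_eq.1 Φ.map_lfp).symm
  refine ⟨Φ.lfp, fun t => ?_⟩
  rw [← digitsMSBEquiv_apply_val, hdigits]
  exact abs_sub_cellCenter_cellIndex_le (hgR _ t)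

theorem LipschitzWith.antitone_add_mul_sub {f : ℝ → ℝ} {K : ℝ≥0} (hf : LipschitzWith K f)
    (c : ℝ) : Antitone fun y => f y + K * (c - y) := by
  intro y y' hyy'
  have := (abs_le.1 (hf.dist_le_mul y' y)).2
  rw [Real.dist_eq, abs_of_nonneg (sub_nonneg.2 hyy')] at this
  linarith

theorem LipschitzWith.abs_add_mul_sub_le {f : ℝ → ℝ} {K : ℝ≥0} (hf : LipschitzWith K f)
    {c y : ℝ} (hy : 0 ≤ y) (hyc : y ≤ c) : |f y + K * (c - y)| ≤ |f 0| + K * c := by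
  have h := hf.dist_le_mul y 0
  rw [Real.dist_eq, Real.dist_eq, sub_zero, abs_of_nonneg hy, abs_le] at h
  have hKcy : 0 ≤ (K : ℝ) * (c - y) := mul_nonneg K.2 (sub_nonneg.2 hyc)
  rw [abs_le]
  constructor <;> linarith [neg_abs_le (f 0), le_abs_self (f 0)]

theorem stmt_10_general (j n d : ℕ)
    (x : Fin ((j * (n + 1) + 1) ^ d) → ℝ)
    (hx0 : ∀ i, 0 ≤ x i) (hxn : ∀ i, x i ≤ (n : ℝ)) (hmono : Monotone x)
    (f : ℝ → (Fin d → ℝ)) (hf : LipschitzWith (j : NNReal) f) (hf0 : ‖f 0‖ ≤ (j : ℝ)) :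
    ∃ i, ‖f (x i) - (fun t : Fin d =>
        ((j * (n + 1) : ℝ)
          - ((j * (n + 1) : ℝ) / ((j * (n + 1) : ℝ) + 1)) *
            (2 * (((i : ℕ) / (j * (n + 1) + 1) ^ (d - 1 - (t : ℕ))) % (j * (n + 1) + 1) : ℕ) + 1)
          - (j : ℝ) * ((n : ℝ) - x i)))‖ < 1 := by
  have hcoord (t : Fin d) : LipschitzWith j fun y => f y t := by
    have := (LipschitzWith.eval t).comp hf
    rwa [one_mul] at this
  have hR : ((j * (n + 1) : ℕ) : ℝ) = j * (n + 1) := by push_cast; ring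
  obtain ⟨i, hi⟩ := exists_abs_sub_cellCenter_le (R := j * (n + 1))
    (fun i t => f (x i) t + j * (n - x i))
    (fun i i' hii' t => ((hcoord t).antitone_add_mul_sub n) (hmono hii'))
    (fun i t => by
      refine ((hcoord t).abs_add_mul_sub_le (hx0 i) (hxn i)).trans ?_
      rw [hR, NNReal.coe_natCast]
      linarith [(norm_le_pi_norm (f 0) t).trans hf0, Real.norm_eq_abs (f 0 t)])
  have hρ : ((j * (n + 1) : ℕ) : ℝ) / ((j * (n + 1) : ℕ) + 1) < 1 :=
    (div_lt_one (by positivity)).2 (lt_add_one _)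
  refine ⟨i, lt_of_le_of_lt ?_ hρ⟩
  refine (pi_norm_le_iff_of_nonneg (by positivity)).2 fun t => ?_
  rw [Pi.sub_apply, Real.norm_eq_abs]
  convert hi t using 2
  simp only [cellCenter, hR]
  ring

/-- Claim 3.1: with `k = (j(n+1)+1)^d`, `0 ≤ x₁ ≤ … ≤ x_k ≤ n`,
`r = j(n+1)`, `r' = r/(r+1)`, centers `z i` of the canonical partition of the `ℓ∞`-ball
of radius `r` in `ℝ^d` into `k` subballs of radius `r'`, indexed decreasingly in the
lexicographic order (the `t`-th coordinate of `z i` is `r - r'(2 aₜ(i) + 1)` where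
`aₜ(i) = (i / (r+1)^(d-1-t)) % (r+1)` is the `t`-th most significant base-`(r+1)` digit
of `i`), and `y i = z i - j(n - x i)·(1,…,1)`, every `j`-Lipschitz `f : ℝ → ℝ^d` (sup
norm) with `‖f 0‖ ≤ j` satisfies `‖f (x i) - y i‖ < 1` for some `i`. -/
theorem stmt_10 (j n d : ℕ) (hj : 1 ≤ j) (hn : 1 ≤ n) (hd : 1 ≤ d)
    (x : Fin ((j * (n + 1) + 1) ^ d) → ℝ)
    (hx0 : ∀ i, 0 ≤ x i) (hxn : ∀ i, x i ≤ (n : ℝ)) (hmono : Monotone x)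
    (f : ℝ → (Fin d → ℝ)) (hf : LipschitzWith (j : NNReal) f) (hf0 : ‖f 0‖ ≤ (j : ℝ)) :
    ∃ i, ‖f (x i) - (fun t : Fin d =>
        ((j * (n + 1) : ℝ)
          - ((j * (n + 1) : ℝ) / ((j * (n + 1) : ℝ) + 1)) *
            (2 * (((i : ℕ) / (j * (n + 1) + 1) ^ (d - 1 - (t : ℕ))) % (j * (n + 1) + 1) : ℕ) + 1)
          - (j : ℝ) * ((n : ℝ) - x i)))‖ < 1 :=
  stmt_10_general j n d x hx0 hxn hmono f hf hf0
end

section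
/- Let $m, d \ge 1$ and let $(x_i)_{i \in I}$ be a sequence in $\mathbb{R}^m$ that has a subsequence converging to some point $x \in \mathbb{R}^m$. Then $(x_i)_{i \in I}$ is $d$-controlling. -/
open Filter

/-- A sequence `(x i)` in `ℝ^m` (sup norm) is `d`-controlling if one can choose points
`(y i)` in `ℝ^d` so that every Lipschitz function `f : ℝ^m → ℝ^d` satisfies
`‖f (x i) - y i‖ < 1` for some `i`. -/
def Controlling (m d : ℕ) {I : Type*} (x : I → (Fin m → ℝ)) : Prop :=
  ∃ y : I → (Fin d → ℝ), ∀ f : (Fin m → ℝ) → (Fin d → ℝ),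
    (∃ C : NNReal, LipschitzWith C f) → ∃ i, ‖f (x i) - y i‖ < 1

/-! Along the convergent subsequence `x (φ k) → p` we place a sequence `v` in the target that
visits every open set infinitely often (a dense sequence, each term repeated along `Nat.unpair`).
For continuous `f`, the points `f (x (φ k))` eventually stay near `f p`, while `v k` is near
`f p` for infinitely many `k`; any such late `k` gives `f (x (φ k))` close to `v k`. -/

open Topology

theorem TopologicalSpace.exists_seq_forall_mapClusterPt (Y : Type*) [TopologicalSpace Y]
    [TopologicalSpace.SeparableSpace Y] [Nonempty Y] :
    ∃ v : ℕ → Y, ∀ y, MapClusterPt y atTop v := by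
  obtain ⟨u, hu⟩ := TopologicalSpace.exists_dense_seq Y
  refine ⟨fun k => u k.unpair.1, fun y => ?_⟩
  rw [mapClusterPt_iff_frequently]
  intro U hU
  obtain ⟨n, hn⟩ := hu.exists_mem_open isOpen_interior ⟨y, mem_interior_iff_mem_nhds.2 hU⟩
  refine frequently_atTop.2 fun N => ⟨Nat.pair n N, Nat.right_le_pair n N, ?_⟩
  simpa using interior_subset hn

theorem exists_frequently_dist_lt_of_tendsto {Y : Type*} [PseudoMetricSpace Y]
    {g v : ℕ → Y} {y : Y} (hg : Tendsto g atTop (𝓝 y)) (hv : MapClusterPt y atTop v)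
    {ε : ℝ} (hε : 0 < ε) : ∃ k, dist (g k) (v k) < ε := by
  have hg_near : ∀ᶠ k in atTop, dist (g k) y < ε / 2 :=
    Metric.tendsto_nhds.1 hg _ (half_pos hε)
  have hv_near : ∃ᶠ k in atTop, v k ∈ Metric.ball y (ε / 2) :=
    mapClusterPt_iff_frequently.1 hv _ (Metric.ball_mem_nhds y (half_pos hε))
  obtain ⟨k, hvk, hgk⟩ := (hv_near.and_eventually hg_near).exists
  refine ⟨k, ?_⟩
  calc dist (g k) (v k) ≤ dist (g k) y + dist y (v k) := dist_triangle _ _ _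
    _ < ε / 2 + ε / 2 := add_lt_add hgk (by rwa [dist_comm, ← Metric.mem_ball])
    _ = ε := add_halves ε

theorem exists_forall_continuousAt_exists_dist_lt {X Y I : Type*} [TopologicalSpace X]
    [PseudoMetricSpace Y] [TopologicalSpace.SeparableSpace Y] [Nonempty Y]
    (x : I → X) {φ : ℕ → I} (hφ : Function.Injective φ) {p : X}
    (hx : Tendsto (fun k => x (φ k)) atTop (𝓝 p)) :
    ∃ y : I → Y, ∀ f : X → Y, ContinuousAt f p → ∀ ε > 0, ∃ i, dist (f (x i)) (y i) < ε := by
  obtain ⟨v, hv⟩ := TopologicalSpace.exists_seq_forall_mapClusterPt Y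
  refine ⟨Function.extend φ v fun _ => v 0, fun f hf ε hε => ?_⟩
  obtain ⟨k, hk⟩ := exists_frequently_dist_lt_of_tendsto (hf.tendsto.comp hx) (hv (f p)) hε
  exact ⟨φ k, by rwa [hφ.extend_apply]⟩

theorem stmt_13_general (m d : ℕ)
    {I : Type*} (x : I → (Fin m → ℝ))
    (h : ∃ (φ : ℕ → I) (p : Fin m → ℝ), Function.Injective φ ∧
      Tendsto (fun k => x (φ k)) atTop (nhds p)) :
    Controlling m d x := by
  obtain ⟨φ, p, hφ, hx⟩ := h
  obtain ⟨y, hy⟩ := exists_forall_continuousAt_exists_dist_lt (Y := Fin d → ℝ) x hφ hx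
  refine ⟨y, fun f ⟨C, hf⟩ => ?_⟩
  simpa only [dist_eq_norm] using hy f hf.continuous.continuousAt 1 one_pos

/-- a sequence in `ℝ^m` having a convergent subsequence is `d`-controlling. -/
theorem stmt_13 (m d : ℕ) (hm : 1 ≤ m) (hd : 1 ≤ d)
    {I : Type*} (x : I → (Fin m → ℝ))
    (h : ∃ (φ : ℕ → I) (p : Fin m → ℝ), Function.Injective φ ∧
      Tendsto (fun k => x (φ k)) atTop (nhds p)) :
    Controlling m d x :=
  stmt_13_general m d x h
end

section
/- Let $m \le d$ be positive integers and suppose a sequence $(x_i)_{i \in I}$ in $\mathbb{R}^m$ satisfies: for every $\alpha > 0$, the set of points $x \in \mathbb{R}^m$ with $|\{i \in I : \|x_i - x\|_\infty < \alpha\}| < \|x\|_\infty^{d-m}$ is bounded. Then $\sup_{n \in \mathbb{N}} |\{i \in I : \|x_i\|_\infty \le n\}| / n^d = \infty$. -/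
/-!
Fix `α > 0`. Outside a bounded set, every `α`-ball centred at `p` contains at least
`‖p‖ ^ (d - m)` of the points. The annulus `n ≤ ‖p‖ ≤ 2n` contains a grid of `(n T) ^ m`
centres with spacing `1 / T = 2 α`, so the corresponding balls are disjoint and lie in the ball of
radius `3 n`; hence that ball holds at least `T ^ m n ^ d` points. Since `α` (hence `T`) is
arbitrary, the ratio to `(3 n) ^ d` is unbounded.
-/

open ENNReal Metric Filter

theorem card_mul_le_encard_norm_le {E I ι : Type*} [SeminormedAddCommGroup E] [Fintype ι]
    (x : I → E) (p : ι → E) {α R : ℝ} {N : ℕ∞}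
    (hsep : Pairwise fun j j' => 2 * α ≤ dist (p j) (p j'))
    (hN : ∀ j, N ≤ {i | ‖x i - p j‖ < α}.encard) (hR : ∀ j, ‖p j‖ + α ≤ R) :
    Fintype.card ι * N ≤ {i | ‖x i‖ ≤ R}.encard := by
  set S : ι → Set I := fun j => x ⁻¹' ball (p j) α
  have hS : ∀ j, S j = {i | ‖x i - p j‖ < α} := fun j => by ext; simp [S, dist_eq_norm]
  have hdisj : Pairwise (Function.onFun Disjoint S) := fun j j' hne =>
    (ball_disjoint_ball (by linarith [hsep hne])).preimage x
  have hsub : (⋃ j, S j) ⊆ {i | ‖x i‖ ≤ R} := Set.iUnion_subset fun j i hi => by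
    rw [hS] at hi
    replace hi : ‖x i - p j‖ < α := hi
    show ‖x i‖ ≤ R
    have := norm_le_norm_sub_add (x i) (p j)
    linarith [hR j]
  calc Fintype.card ι * N = ∑ _j : ι, N := by simp
    _ ≤ ∑ j, (S j).encard := Finset.sum_le_sum fun j _ => hS j ▸ hN j
    _ = (⋃ j, S j).encard := by
      rw [Set.encard_iUnion_of_finite hdisj, finsum_eq_sum_of_fintype]
    _ ≤ {i | ‖x i‖ ≤ R}.encard := Set.encard_le_encard hsub

theorem eventually_pow_le_encard_of_isBounded {E I : Type*} [SeminormedAddCommGroup E]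
    (x : I → E) {α : ℝ} {k : ℕ}
    (hb : Bornology.IsBounded
      {p : E | (({i | ‖x i - p‖ < α}.encard : ℝ≥0∞) < ENNReal.ofReal (‖p‖ ^ k))}) :
    ∀ᶠ n : ℕ in atTop, ∀ p : E, (n : ℝ) ≤ ‖p‖ →
      ((n ^ k : ℕ) : ℕ∞) ≤ {i | ‖x i - p‖ < α}.encard := by
  obtain ⟨r, hr⟩ := hb.subset_closedBall 0
  filter_upwards [eventually_gt_atTop ⌈r⌉₊] with n hn p hp
  have hrp : r < ‖p‖ := (Nat.lt_of_ceil_lt hn).trans_le hp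
  have hnot : ENNReal.ofReal (‖p‖ ^ k) ≤ ({i | ‖x i - p‖ < α}.encard : ℝ≥0∞) :=
    not_lt.mp fun hlt => (mem_closedBall_zero_iff.mp (hr hlt)).not_gt hrp
  rw [← ENat.toENNReal_le]
  calc (((n ^ k : ℕ) : ℕ∞) : ℝ≥0∞) = ENNReal.ofReal ((n : ℝ) ^ k) := by
        rw [ENat.toENNReal_coe, ← ENNReal.ofReal_natCast]; push_cast; rfl
    _ ≤ ENNReal.ofReal (‖p‖ ^ k) := ENNReal.ofReal_le_ofReal (by gcongr)
    _ ≤ _ := hnot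

noncomputable def annulusGrid (m n T : ℕ) (j : Fin m → Fin (n * T)) : Fin m → ℝ :=
  fun k => n + (j k : ℝ) / T

section annulusGrid

variable {m n T : ℕ}

theorem le_norm_annulusGrid (hm : 0 < m) (j : Fin m → Fin (n * T)) :
    (n : ℝ) ≤ ‖annulusGrid m n T j‖ := by
  have hcoord := norm_le_pi_norm (annulusGrid m n T j) ⟨0, hm⟩
  have : (0 : ℝ) ≤ (j ⟨0, hm⟩ : ℝ) / T := by positivity
  rw [Real.norm_eq_abs] at hcoord
  unfold annulusGrid at hcoord ⊢
  linarith [le_abs_self ((n : ℝ) + (j ⟨0, hm⟩ : ℝ) / T)]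

theorem norm_annulusGrid_le (j : Fin m → Fin (n * T)) : ‖annulusGrid m n T j‖ ≤ 2 * n := by
  refine (pi_norm_le_iff_of_nonneg (by positivity)).mpr fun k => ?_
  have hstep : (j k : ℝ) / T ≤ n := div_le_of_le_mul₀ (by positivity) (by positivity) <| by
    exact_mod_cast (j k).2.le
  have : (0 : ℝ) ≤ (j k : ℝ) / T := by positivity
  rw [Real.norm_eq_abs, abs_le]
  unfold annulusGrid
  constructor <;> linarith

theorem inv_le_dist_annulusGrid {j j' : Fin m → Fin (n * T)} (hne : j ≠ j') :
    (T : ℝ)⁻¹ ≤ dist (annulusGrid m n T j) (annulusGrid m n T j') := by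
  obtain ⟨k, hk⟩ := Function.ne_iff.mp hne
  have hgap : (1 : ℝ) ≤ |(j k : ℝ) - j' k| := by
    have : (1 : ℤ) ≤ |(j k : ℤ) - j' k| := Int.one_le_abs (sub_ne_zero.mpr (by omega))
    exact_mod_cast this
  calc (T : ℝ)⁻¹ ≤ |(j k : ℝ) - j' k| / T := by
        rw [inv_eq_one_div]; gcongr
    _ = dist (annulusGrid m n T j k) (annulusGrid m n T j' k) := by
        rw [Real.dist_eq, annulusGrid, annulusGrid, add_sub_add_left_eq_sub, ← sub_div, abs_div,
          Nat.abs_cast]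
    _ ≤ _ := dist_le_pi_dist _ _ k

end annulusGrid

/-- if for every `α > 0` the set of points `x ∈ ℝ^m` whose `α`-neighborhood
(sup norm) contains fewer than `‖x‖^(d-m)` terms of the sequence is bounded, then the
sequence satisfies `sup_n |{i : ‖x_i‖ ≤ n}| / n^d = ∞`. -/
theorem stmt_14 (m d : ℕ) (hm : 1 ≤ m) (hmd : m ≤ d)
    {I : Type*} (x : I → (Fin m → ℝ))
    (h : ∀ α : ℝ, 0 < α → Bornology.IsBounded
      {p : Fin m → ℝ |
        (({i | ‖x i - p‖ < α}.encard : ℝ≥0∞) < ENNReal.ofReal (‖p‖ ^ (d - m)))}) :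
    ∀ M : ℕ, ∃ n : ℕ, 0 < n ∧
      ((M * n ^ d : ℕ) : ℕ∞) ≤ {i | ‖x i‖ ≤ (n : ℝ)}.encard := by
  intro M
  set T := M * 3 ^ d + 1
  set α : ℝ := (2 * T)⁻¹
  have hα : 0 < α := by positivity
  have hαT : 2 * α = (T : ℝ)⁻¹ := by simp only [α, mul_inv, ← mul_assoc]; norm_num
  obtain ⟨n, hdense, hn⟩ :=
    ((eventually_pow_le_encard_of_isBounded x (h α hα)).and (eventually_gt_atTop 0)).exists
  refine ⟨3 * n, by positivity, ?_⟩
  have hcount := card_mul_le_encard_norm_le x (annulusGrid m n T) (R := 3 * n)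
    (fun j j' hne => hαT ▸ inv_le_dist_annulusGrid hne)
    (fun j => hdense _ (le_norm_annulusGrid hm j)) fun j => by
      have : α ≤ 1 := inv_le_one_of_one_le₀ (by norm_cast; omega)
      have : (1 : ℝ) ≤ n := by exact_mod_cast hn
      linarith [norm_annulusGrid_le (T := T) j]
  have harith : M * (3 * n) ^ d ≤ (n * T) ^ m * n ^ (d - m) := by
    calc M * (3 * n) ^ d = M * 3 ^ d * n ^ d := by ring
      _ ≤ T ^ m * n ^ d := by gcongr; exact (Nat.le_succ _).trans (Nat.le_self_pow (by omega) _)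
      _ = (n * T) ^ m * n ^ (d - m) := by
        rw [mul_pow, mul_right_comm, ← pow_add, Nat.add_sub_cancel' hmd, mul_comm]
  simp only [Fintype.card_fun, Fintype.card_fin] at hcount
  calc ((M * (3 * n) ^ d : ℕ) : ℕ∞) ≤ ((n * T) ^ m * n ^ (d - m) : ℕ) := by
        exact_mod_cast harith
    _ ≤ _ := by push_cast at hcount ⊢; exact hcount
end
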